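/- Let G be a graph with a tree-depth decomposition, u a vertex, and φ: tail(u) → {A, F, T}. Let N(u,φ,i) be the number of i-element subsets X ⊆ tree[u] such that X ∪ φ^{-1}(T) dominates tree[u] and dominates no vertex of φ^{-1}(F). Then N(u,φ,i) = N'(u, φ[u→A], i) − N'(u, φ[u→F], i) + N'(u, φ[u→T], i−1), where N'(u,ψ,i) counts i-element subsets X ⊆ tree(u) such that X ∪ ψ^{-1}(T) dominates tree(u) and no vertex of ψ^{-1}(F). -/

import Mathlib

/-- A tree-depth decomposition of `G`: identifying (via the bijection μ) the nodes of the
rooted forest with the vertices, it is given by the ancestor-or-equal relation `le`,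
a partial order in which the ancestors of any element form a chain, and such that the
endpoints of every edge of `G` are comparable. -/
structure TreeDepthDecomp {V : Type} (G : SimpleGraph V) where
  le : V → V → Prop
  le_refl : ∀ a, le a a
  le_trans : ∀ {a b c}, le a b → le b c → le a c
  le_antisymm : ∀ {a b}, le a b → le b a → a = b
  ancestors_chain : ∀ {a b c}, le a c → le b c → le a b ∨ le b a
  adj_comparable : ∀ {u w}, G.Adj u w → le u w ∨ le w u

/-- The decomposition has depth at most `d`: every chain (in particular every
root-to-leaf path) has at most `d` nodes. -/
def TreeDepthDecomp.DepthLE {V : Type} {G : SimpleGraph V}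
    (D : TreeDepthDecomp G) (d : ℕ) : Prop :=
  ∀ s : Finset V, (∀ a ∈ s, ∀ b ∈ s, D.le a b ∨ D.le b a) → s.card ≤ d
/-- `v` is a child of `u` in the decomposition's forest: `u` is a strict ancestor of `v`
and no node lies strictly between them. -/
def TreeDepthDecomp.IsChild {V : Type} {G : SimpleGraph V} (D : TreeDepthDecomp G)
    (u v : V) : Prop :=
  D.le u v ∧ u ≠ v ∧ ∀ w, D.le u w → D.le w v → w = u ∨ w = v

/-- `tree[u]`: the set of vertices in the subtree rooted at `u` (including `u`). -/
def TreeDepthDecomp.subtree {V : Type} {G : SimpleGraph V} (D : TreeDepthDecomp G)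
    (u : V) : Set V := {w | D.le u w}

/-- `tail(u)`: the set of strict ancestors of `u`. -/
def TreeDepthDecomp.tail {V : Type} {G : SimpleGraph V} (D : TreeDepthDecomp G)
    (u : V) : Set V := {w | D.le w u ∧ w ≠ u}

/-- `tail[u]`: the set of ancestors of `u`, including `u` itself. -/
def TreeDepthDecomp.tailc {V : Type} {G : SimpleGraph V} (D : TreeDepthDecomp G)
    (u : V) : Set V := {w | D.le w u}
/-- The three marks: Allowed, Forbidden, Taken. -/
inductive Mark : Type | A | F | T
deriving DecidableEq

/-- `S` dominates the vertex `w`: `w ∈ S` or `w` has a neighbor in `S`. -/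
def Dominates {V : Type} (G : SimpleGraph V) (S : Set V) (w : V) : Prop :=
  w ∈ S ∨ ∃ x ∈ S, G.Adj x w

/-- The Taken vertices of `tail[u]` under `φ`. -/
def TakenSet {V : Type} {G : SimpleGraph V} (D : TreeDepthDecomp G)
    (u : V) (φ : V → Mark) : Set V := {w | w ∈ D.tailc u ∧ φ w = Mark.T}

/-- `N(u, φ, i)`: the number of `i`-element subsets `X ⊆ tree[u]` such that
`X ∪ φ⁻¹(T)` dominates `tree[u]` and dominates no vertex of `φ⁻¹(F)` (with `φ` read on
`tail(u)`). -/
noncomputable def Ncnt {V : Type} (G : SimpleGraph V) (D : TreeDepthDecomp G)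
    (u : V) (φ : V → Mark) (i : ℕ) : ℕ :=
  Nat.card {X : Finset V // (↑X : Set V) ⊆ D.subtree u ∧ X.card = i ∧
    (∀ w ∈ D.subtree u,
      Dominates G ((↑X : Set V) ∪ {w' | w' ∈ D.tail u ∧ φ w' = Mark.T}) w) ∧
    (∀ w ∈ D.tail u, φ w = Mark.F →
      ¬ Dominates G ((↑X : Set V) ∪ {w' | w' ∈ D.tail u ∧ φ w' = Mark.T}) w)}

/-- `N'(u, ψ, i)`: the number of `i`-element subsets `X ⊆ tree(u)` such that
`X ∪ ψ⁻¹(T)` dominates `tree(u)` and dominates no vertex of `ψ⁻¹(F)` (with `ψ` read on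
`tail[u]`). -/
noncomputable def N'cnt {V : Type} (G : SimpleGraph V) (D : TreeDepthDecomp G)
    (u : V) (ψ : V → Mark) (i : ℕ) : ℕ :=
  Nat.card {X : Finset V // (↑X : Set V) ⊆ D.subtree u \ {u} ∧ X.card = i ∧
    (∀ w ∈ D.subtree u \ {u}, Dominates G ((↑X : Set V) ∪ TakenSet D u ψ) w) ∧
    (∀ w ∈ D.tailc u, ψ w = Mark.F →
      ¬ Dominates G ((↑X : Set V) ∪ TakenSet D u ψ) w)}

/-!
Split the sets `X` counted by `N(u,φ,i)` according to whether `u ∈ X`. Those avoiding `u` are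
the sets counted by `N'(u,φ[u→A],i)` that moreover dominate `u`; since `φ[u→F]` only adds the
requirement that `u` stay undominated, there are `N'(u,φ[u→A],i) − N'(u,φ[u→F],i)` of them.
Removing `u` from those containing it is a bijection onto the sets counted by `N'(u,φ[u→T],i−1)`,
as marking `u` Taken puts it back into the dominating set. Apart from `tree[u] = tree(u) ∪ {u}`
and `tail[u] = tail(u) ∪ {u}` no tree structure is involved.
-/

section

variable {V : Type} (G : SimpleGraph V)

def domSets (R T F : Set V) (i : ℕ) : Set (Finset V) :=
  {X | (↑X : Set V) ⊆ R ∧ X.card = i ∧ (∀ w ∈ R, Dominates G (↑X ∪ T) w) ∧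
    ∀ w ∈ F, ¬ Dominates G (↑X ∪ T) w}

section domSets

variable {G} {R T F : Set V} {v : V} {i : ℕ}

theorem notMem_of_mem_domSets {X : Finset V} (hv : v ∉ R) (hX : X ∈ domSets G R T F i) :
    v ∉ X :=
  fun h => hv (hX.1 h)

theorem domSets_insert_forbidden :
    domSets G R T (insert v F) i = domSets G R T F i \ {X | Dominates G (↑X ∪ T) v} := by
  ext X
  simp only [domSets, Set.forall_mem_insert, Set.mem_sdiff, Set.mem_ofPred_eq]
  tauto

theorem domSets_insert_sdiff_mem (hv : v ∉ R) :
    domSets G (insert v R) T F i \ {X | v ∈ X} =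
      domSets G R T F i ∩ {X | Dominates G (↑X ∪ T) v} := by
  ext X
  have hsub : (↑X : Set V) ⊆ R ↔ (↑X : Set V) ⊆ insert v R ∧ v ∉ X :=
    ⟨fun h => ⟨h.trans (Set.subset_insert v R), fun hvX => hv (h hvX)⟩,
      fun ⟨h, hvX⟩ => (Set.subset_insert_iff_of_notMem hvX).1 h⟩
  simp only [domSets, Set.forall_mem_insert, Set.mem_sdiff, Set.mem_inter_iff, Set.mem_ofPred_eq,
    hsub]
  tauto

theorem domSets_insert_inter_mem_zero :
    domSets G (insert v R) T F 0 ∩ {X | v ∈ X} = ∅ := by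
  ext X
  simp +contextual [domSets, Finset.card_eq_zero]

theorem insert_mem_domSets_insert_iff [DecidableEq V] {Y : Finset V} (hvY : v ∉ Y)
    {j : ℕ} :
    insert v Y ∈ domSets G (insert v R) T F (j + 1) ↔ Y ∈ domSets G R (insert v T) F j := by
  have hunion : insert v (↑Y : Set V) ∪ T = ↑Y ∪ insert v T :=
    Set.insert_union.trans Set.union_insert.symm
  have hdom_v : Dominates G (↑Y ∪ insert v T) v := Or.inl (Or.inr (Set.mem_insert v T))
  simp only [domSets, Set.mem_ofPred_eq, hunion, Finset.coe_insert,
    Set.insert_subset_insert_iff (Finset.mem_coe.not.2 hvY), Finset.card_insert_of_notMem hvY,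
    Nat.add_right_cancel_iff, Set.forall_mem_insert, hdom_v, true_and]

theorem domSets_insert_inter_mem_succ [DecidableEq V] (hv : v ∉ R) (j : ℕ) :
    domSets G (insert v R) T F (j + 1) ∩ {X | v ∈ X} =
      insert v '' domSets G R (insert v T) F j := by
  ext X
  constructor
  · rintro ⟨hX, hvX⟩
    refine ⟨X.erase v, ?_, Finset.insert_erase hvX⟩
    rwa [← insert_mem_domSets_insert_iff (Finset.notMem_erase v X), Finset.insert_erase hvX]
  · rintro ⟨Y, hY, rfl⟩
    exact ⟨(insert_mem_domSets_insert_iff (notMem_of_mem_domSets hv hY)).2 hY,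
      Finset.mem_insert_self v Y⟩

theorem injOn_insert_domSets [DecidableEq V] (hv : v ∉ R) :
    Set.InjOn (insert v) (domSets G R T F i) := fun X hX Y hY hXY => by
  rw [← Finset.erase_insert (notMem_of_mem_domSets hv hX), hXY,
    Finset.erase_insert (notMem_of_mem_domSets hv hY)]

theorem ncard_domSets_insert [Finite V] [DecidableEq V] (hv : v ∉ R) :
    ((domSets G (insert v R) T F i).ncard : ℤ) =
      (domSets G R T F i).ncard - (domSets G R T (insert v F) i).ncard +
        if i = 0 then 0 else (domSets G R (insert v T) F (i - 1)).ncard := by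
  rw [← Set.ncard_inter_add_ncard_sdiff_eq_ncard _ {X | v ∈ X}, domSets_insert_sdiff_mem hv,
    domSets_insert_forbidden,
    ← Set.ncard_inter_add_ncard_sdiff_eq_ncard (domSets G R T F i) {X | Dominates G (↑X ∪ T) v}]
  cases i with
  | zero => simp [domSets_insert_inter_mem_zero]
  | succ j =>
    rw [domSets_insert_inter_mem_succ hv, (injOn_insert_domSets hv).ncard_image]
    push_cast
    ring

end domSets

theorem setOf_mem_insert_and_update_eq [DecidableEq V] {s : Set V} {u : V} (hu : u ∉ s)
    (φ : V → Mark) (m c : Mark) :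
    {w | w ∈ insert u s ∧ Function.update φ u m w = c} =
      if m = c then insert u {w | w ∈ s ∧ φ w = c} else {w | w ∈ s ∧ φ w = c} := by
  ext w
  by_cases hw : w = u
  · subst hw
    split_ifs <;> simp_all
  · split_ifs <;> simp [hw]

namespace TreeDepthDecomp

variable {G} (D : TreeDepthDecomp G) (u : V)

theorem mem_subtree_self : u ∈ D.subtree u := D.le_refl u

theorem notMem_tail_self : u ∉ D.tail u := fun h => h.2 rfl

theorem tailc_eq_insert_tail : D.tailc u = insert u (D.tail u) := by
  ext w
  by_cases hw : w = u
  · simp [hw, tailc, D.le_refl]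
  · simp [hw, tailc, tail]

end TreeDepthDecomp

theorem Ncnt_eq_ncard_domSets (D : TreeDepthDecomp G) (u : V) (φ : V → Mark) (i : ℕ) :
    Ncnt G D u φ i = (domSets G (D.subtree u) {w | w ∈ D.tail u ∧ φ w = Mark.T}
      {w | w ∈ D.tail u ∧ φ w = Mark.F} i).ncard := by
  rw [← Nat.card_coe_set_eq]
  exact Nat.card_congr <| Equiv.subtypeEquivRight fun X => by
    simp only [domSets, Set.mem_ofPred_eq, and_imp]

theorem N'cnt_eq_ncard_domSets (D : TreeDepthDecomp G) (u : V) (ψ : V → Mark) (i : ℕ) :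
    N'cnt G D u ψ i = (domSets G (D.subtree u \ {u}) {w | w ∈ D.tailc u ∧ ψ w = Mark.T}
      {w | w ∈ D.tailc u ∧ ψ w = Mark.F} i).ncard := by
  rw [← Nat.card_coe_set_eq]
  exact Nat.card_congr <| Equiv.subtypeEquivRight fun X => by
    simp only [domSets, TakenSet, Set.mem_ofPred_eq, and_imp]

end

/-- the inclusion–exclusion recursion for counting dominating sets along a
tree-depth decomposition:
`N(u,φ,i) = N'(u,φ[u→A],i) − N'(u,φ[u→F],i) + N'(u,φ[u→T],i−1)`,
with the convention `N'(·,·,−1) = 0`. -/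
theorem domination_count_recursion {V : Type} [Fintype V] [DecidableEq V]
    (G : SimpleGraph V) (D : TreeDepthDecomp G) (u : V) (φ : V → Mark) (i : ℕ) :
    (Ncnt G D u φ i : ℤ) =
      (N'cnt G D u (Function.update φ u Mark.A) i : ℤ)
      - (N'cnt G D u (Function.update φ u Mark.F) i : ℤ)
      + (if i = 0 then 0 else (N'cnt G D u (Function.update φ u Mark.T) (i - 1) : ℤ)) := by
  have hu : u ∉ D.subtree u \ {u} := fun h => h.2 rfl
  rw [Ncnt_eq_ncard_domSets, ← Set.insert_sdiff_self_of_mem (D.mem_subtree_self u),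
    ncard_domSets_insert hu]
  simp only [N'cnt_eq_ncard_domSets, D.tailc_eq_insert_tail,
    setOf_mem_insert_and_update_eq (D.notMem_tail_self u)]
  simp
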